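/- arXiv:2410.21537 — 4 statements merged into one kernel-verified Lean document; each statement's English description precedes it below -/
import Mathlib

section
/- In a κ-compactly generated category, every weakly κ-compact morphism factors through a κ-compact object. -/
universe w v u

open CategoryTheory Limits Opposite

/-- A category `I` is `κ`-filtered if every diagram indexed by a `κ`-small category admits a
cocone. -/
def IsKappaFiltered (κ : Cardinal.{w}) (I : Cat.{w, w}) : Prop :=
  ∀ A : Cat.{w, w}, Cardinal.mk A < κ →
    Cardinal.mk (Σ (a : A) (b : A), a ⟶ b) < κ →
    ∀ F : A ⥤ I, Nonempty (Cocone F)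

/-- A morphism `f : x ⟶ y` is weakly `κ`-compact if for every `κ`-filtered diagram `z` with a
colimit and every map `h` from `y` into the colimit, `f ≫ h` factors through some stage of the
colimit, compatibly with the colimit inclusion. -/
def IsWeaklyKappaCompact {C : Type u} [Category.{v} C] (κ : Cardinal.{w}) {x y : C}
    (f : x ⟶ y) : Prop :=
  ∀ I : Cat.{w, w}, IsKappaFiltered κ I →
    ∀ (z : I ⥤ C) (t : Cocone z), IsColimit t →
      ∀ h : y ⟶ t.pt, ∃ (j : I) (u : x ⟶ z.obj j), u ≫ t.ι.app j = f ≫ h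

/-- An object `c` is `κ`-compact if `Hom(c, -)` preserves `κ`-filtered colimits. -/
def IsKappaCompactObj {C : Type u} [Category.{v} C] (κ : Cardinal.{w}) (c : C) : Prop :=
  ∀ I : Cat.{w, w}, IsKappaFiltered κ I →
    Nonempty (PreservesColimitsOfShape I (coyoneda.obj (op c)))

/-- In a `κ`-compactly generated category (every object is a `κ`-filtered colimit of `κ`-compact
objects), every weakly `κ`-compact morphism factors through a `κ`-compact object. -/
theorem stmt_2 {C : Type u} [Category.{v} C] (κ : Cardinal.{w})
    (hgen : ∀ X : C, ∃ I : Cat.{w, w}, IsKappaFiltered κ I ∧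
      ∃ (z : I ⥤ C) (t : Cocone z), Nonempty (IsColimit t) ∧ Nonempty (t.pt ≅ X) ∧
        ∀ j : I, IsKappaCompactObj κ (z.obj j))
    {x y : C} (f : x ⟶ y) (hf : IsWeaklyKappaCompact κ f) :
    ∃ (c : C) (u : x ⟶ c) (v : c ⟶ y), IsKappaCompactObj κ c ∧ f = u ≫ v := by
  obtain ⟨I, hI, z, t, ⟨ht⟩, ⟨e⟩, hcomp⟩ := hgen y
  obtain ⟨j, u, hu⟩ := hf I hI z t ht e.inv
  exact ⟨z.obj j, u, t.ι.app j ≫ e.hom, hcomp j, by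
    rw [← Category.assoc, hu, Category.assoc, e.inv_hom_id, Category.comp_id]⟩
end

section
/- Let X → Y ← Z be a cospan of groupoids (or spaces) with pullback P and p ∈ P. The fiber of π₀(P) → π₀(X) × π₀(Z) over the image of p is in bijection with the double coset set π₁(Z,p) \ π₁(Y,p) / π₁(X,p), where the groups act via the induced maps to π₁(Y,p). -/
universe v₁ v₂ v₃ u₁ u₂ u₃

open CategoryTheory

/-! A point of the fiber is the component of some `q` with `q.left ≅ p.left` and
`q.right ≅ p.right`; transporting `q.hom` along these isomorphisms identifies `q` with `p` whose
structure map is precomposed with some `g ∈ Aut (φ.obj p.left)`. A morphism between two such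
twists is a pair `(h, k)` of automorphisms of `p.left` and `p.right`, and its commuting square
says exactly `g₂ = (p.hom ≫ ψ k ≫ p.hom⁻¹) * g₁ * φ h⁻¹`, so twists are connected iff they lie
in the same double coset. -/

theorem CategoryTheory.Zigzag.nonempty_hom {C : Type*} [Category C] [IsGroupoid C] {a b : C}
    (h : Zigzag a b) : Nonempty (a ⟶ b) := by
  induction h with
  | refl => exact ⟨𝟙 _⟩
  | tail _ hz ih =>
    obtain ⟨f⟩ := ih
    rcases hz with ⟨⟨g⟩⟩ | ⟨⟨g⟩⟩
    · exact ⟨f ≫ g⟩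
    · exact ⟨f ≫ inv g⟩

theorem CategoryTheory.ConnectedComponents.mk_eq_mk_iff_nonempty_hom {C : Type*} [Category C]
    [IsGroupoid C] {a b : C} :
    (_root_.Quotient.mk _ a : ConnectedComponents C) = _root_.Quotient.mk _ b ↔
      Nonempty (a ⟶ b) :=
  ⟨fun h => (Quotient.exact h).nonempty_hom, fun ⟨f⟩ => _root_.Quotient.sound (Zigzag.of_hom f)⟩

namespace CategoryTheory.Comma

instance isGroupoid {A : Type*} [Category A] {B : Type*} [Category B] {T : Type*} [Category T]
    {L : A ⥤ T} {R : B ⥤ T} [IsGroupoid A] [IsGroupoid B] : IsGroupoid (Comma L R) where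
  all_isIso e := (isoMk (asIso e.left) (asIso e.right) e.w).isIso_hom

variable {X : Type u₁} [Groupoid.{v₁} X] {Y : Type u₂} [Groupoid.{v₂} Y]
  {Z : Type u₃} [Groupoid.{v₃} Z] {φ : X ⥤ Y} {ψ : Z ⥤ Y} (p : Comma φ ψ)

-- `toFun` is spelled as in `stmt_6`, so that the range is definitionally the set there.
noncomputable def rightAutHom : Aut p.right →* Aut (φ.obj p.left) where
  toFun k := asIso p.hom ≪≫ ψ.mapIso k ≪≫ (asIso p.hom).symm
  map_one' := Aut.ext <| by
    change p.hom ≫ ψ.map (𝟙 _) ≫ inv p.hom = 𝟙 _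
    simp
  map_mul' k₁ k₂ := Aut.ext <| by
    change p.hom ≫ ψ.map (k₂.hom ≫ k₁.hom) ≫ inv p.hom =
      (p.hom ≫ ψ.map k₂.hom ≫ inv p.hom) ≫ p.hom ≫ ψ.map k₁.hom ≫ inv p.hom
    simp

-- Reducible so that instance search sees `(p.twist g).left = p.left` when building `asIso`.
abbrev twist (g : Aut (φ.obj p.left)) : Comma φ ψ := ⟨p.left, p.right, g.hom ≫ p.hom⟩

theorem nonempty_twist_hom_twist_iff (g₁ g₂ : Aut (φ.obj p.left)) :
    Nonempty (p.twist g₁ ⟶ p.twist g₂) ↔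
      ∃ c ∈ p.rightAutHom.range, ∃ h ∈ (φ.mapAut p.left).range, g₂ = c * g₁ * h := by
  simp only [MonoidHom.mem_range]
  constructor
  · rintro ⟨m⟩
    refine ⟨_, ⟨asIso m.right, rfl⟩, _, ⟨(asIso m.left)⁻¹, rfl⟩, Aut.ext ?_⟩
    have hw : φ.map m.left ≫ g₂.hom ≫ p.hom = (g₁.hom ≫ p.hom) ≫ ψ.map m.right := m.w
    change g₂.hom = φ.map (inv m.left) ≫ g₁.hom ≫ p.hom ≫ ψ.map m.right ≫ inv p.hom
    rw [← cancel_mono p.hom, ← cancel_epi (φ.map m.left), hw]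
    simp
  · rintro ⟨_, ⟨k, rfl⟩, _, ⟨h, rfl⟩, rfl⟩
    refine ⟨⟨h.inv, k.hom, ?_⟩⟩
    change φ.map h.inv ≫ (φ.map h.hom ≫ g₁.hom ≫ p.hom ≫ ψ.map k.hom ≫ inv p.hom) ≫ p.hom =
      (g₁.hom ≫ p.hom) ≫ ψ.map k.hom
    simpa using Iso.map_inv_hom_id_assoc h φ _

theorem exists_nonempty_hom_twist (q : Comma φ ψ) (u : q.left ⟶ p.left)
    (v : q.right ⟶ p.right) : ∃ g, Nonempty (q ⟶ p.twist g) :=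
  ⟨asIso (φ.map (inv u) ≫ q.hom ≫ ψ.map v ≫ inv p.hom), ⟨⟨u, v, by simp⟩⟩⟩

end CategoryTheory.Comma

/-- For a cospan of groupoids `X ⥤ Y ⥦ Z` with (homotopy) pullback the comma category
`Comma φ ψ`, and a point `p` of the pullback, the fiber of `π₀(P) → π₀(X) × π₀(Z)` over the
image of `p` is in bijection with the double coset set `π₁(Z,p) \ π₁(Y,p) / π₁(X,p)`, where
`π₁(Y,p)` is taken at the basepoint `φ(p.left)` and the groups act via the induced maps. -/
theorem stmt_6 {X : Type u₁} [Groupoid.{v₁} X] {Y : Type u₂} [Groupoid.{v₂} Y]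
    {Z : Type u₃} [Groupoid.{v₃} Z] (φ : X ⥤ Y) (ψ : Z ⥤ Y) (p : Comma φ ψ) :
    Nonempty
      ({c : ConnectedComponents (Comma φ ψ) //
          (Comma.fst φ ψ).mapConnectedComponents c = Quotient.mk _ p.left ∧
          (Comma.snd φ ψ).mapConnectedComponents c = Quotient.mk _ p.right} ≃
        DoubleCoset.Quotient (G := Aut (φ.obj p.left))
          (Set.range (fun k => asIso p.hom ≪≫ ψ.mapIso k ≪≫ (asIso p.hom).symm :
            Aut p.right → Aut (φ.obj p.left)))
          (Set.range (fun h => φ.mapIso h : Aut p.left → Aut (φ.obj p.left)))) := by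
  let f (g : Aut (φ.obj p.left)) : {c : ConnectedComponents (Comma φ ψ) //
      (Comma.fst φ ψ).mapConnectedComponents c = Quotient.mk _ p.left ∧
      (Comma.snd φ ψ).mapConnectedComponents c = Quotient.mk _ p.right} :=
    ⟨Quotient.mk _ (p.twist g), rfl, rfl⟩
  have hf : Function.Surjective f := by
    rintro ⟨⟨q⟩, hl, hr⟩
    obtain ⟨u⟩ := ConnectedComponents.mk_eq_mk_iff_nonempty_hom.mp hl
    obtain ⟨v⟩ := ConnectedComponents.mk_eq_mk_iff_nonempty_hom.mp hr
    obtain ⟨g, hg⟩ := p.exists_nonempty_hom_twist q u v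
    exact ⟨g, Subtype.ext (ConnectedComponents.mk_eq_mk_iff_nonempty_hom.mpr hg).symm⟩
  refine ⟨((Quotient.congrRight fun g₁ g₂ => ?_).trans
    (Setoid.quotientKerEquivOfSurjective f hf)).symm⟩
  change DoubleCoset.setoid p.rightAutHom.range (φ.mapAut p.left).range g₁ g₂ ↔ _
  rw [DoubleCoset.rel_iff, ← p.nonempty_twist_hom_twist_iff, Setoid.ker_def, Subtype.ext_iff]
  exact ConnectedComponents.mk_eq_mk_iff_nonempty_hom.symm
end

section
/- Let B be a 2-category (or bicategory) in which all hom-categories are idempotent-complete, and let f : x → y be a 1-morphism which is a retract, in the arrow category of the underlying 1-category, of a 1-morphism f' : x' → y' admitting a right adjoint. Then f admits a right adjoint. As a special case (B = Cat): if a functor f : C → D between idempotent-complete categories is a retract (in Cat^{Δ¹}) of a left adjoint functor f' : C' → D', then f is a left adjoint. -/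
open CategoryTheory

/-- If a functor `f : C ⥤ D` between idempotent-complete categories is a retract, in the arrow
category of `Cat`, of a functor `f' : C' ⥤ D'` admitting a right adjoint (i.e. a left adjoint
functor), then `f` admits a right adjoint, i.e. `f` is a left adjoint. -/
theorem stmt_15 {C C' D D' : Type*} [Category C] [Category C'] [Category D] [Category D']
    [IsIdempotentComplete C] [IsIdempotentComplete D]
    (f : C ⥤ D) (f' : C' ⥤ D') (hf' : f'.IsLeftAdjoint)
    (iC : C ⥤ C') (iD : D ⥤ D') (rC : C' ⥤ C) (rD : D' ⥤ D)
    (sq1 : iC ⋙ f' ≅ f ⋙ iD) (sq2 : rC ⋙ f ≅ f' ⋙ rD)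
    (retrC : iC ⋙ rC ≅ 𝟭 C) (retrD : iD ⋙ rD ≅ 𝟭 D)
    (hcoh : ∀ X : C, sq2.hom.app (iC.obj X) ≫ rD.map (sq1.hom.app X) =
      f.map (retrC.hom.app X) ≫ retrD.inv.app (f.obj X)) :
    f.IsLeftAdjoint := by
  obtain ⟨g', ⟨adj⟩⟩ := hf'.exists_rightAdjoint
  -- the candidate right adjoint (up to splitting an idempotent)
  let g : D ⥤ C := iD ⋙ g' ⋙ rC
  -- naturality facts, restated in a convenient (defeq) form
  have nat1 : ∀ {X X' : C} (a : X ⟶ X'),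
      f'.map (iC.map a) ≫ sq1.hom.app X' = sq1.hom.app X ≫ iD.map (f.map a) :=
    fun a => sq1.hom.naturality a
  have nat2 : ∀ {Z Z' : C'} (w : Z ⟶ Z'),
      f.map (rC.map w) ≫ sq2.hom.app Z' = sq2.hom.app Z ≫ rD.map (f'.map w) :=
    fun w => sq2.hom.naturality w
  have natc : ∀ {Z Z' : D'} (w : Z ⟶ Z'),
      f'.map (g'.map w) ≫ adj.counit.app Z' = adj.counit.app Z ≫ w :=
    fun w => adj.counit.naturality w
  have natC : ∀ {X X' : C} (a : X ⟶ X'),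
      a ≫ retrC.inv.app X' = retrC.inv.app X ≫ rC.map (iC.map a) :=
    fun a => retrC.inv.naturality a
  have natD : ∀ {Y Y' : D} (k : Y ⟶ Y'),
      rD.map (iD.map k) ≫ retrD.hom.app Y' = retrD.hom.app Y ≫ k :=
    fun k => retrD.hom.naturality k
  -- a "counit-like" natural transformation
  let χ : g ⋙ f ⟶ 𝟭 D :=
    { app := fun Y => sq2.hom.app (g'.obj (iD.obj Y)) ≫ rD.map (adj.counit.app (iD.obj Y)) ≫
        retrD.hom.app Y
      naturality := fun Y Y' k => by
        show f.map (rC.map (g'.map (iD.map k))) ≫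
            (sq2.hom.app (g'.obj (iD.obj Y')) ≫ rD.map (adj.counit.app (iD.obj Y')) ≫
              retrD.hom.app Y') =
          (sq2.hom.app (g'.obj (iD.obj Y)) ≫ rD.map (adj.counit.app (iD.obj Y)) ≫
            retrD.hom.app Y) ≫ k
        rw [reassoc_of% (nat2 (g'.map (iD.map k))), ← rD.map_comp_assoc, natc (iD.map k),
          rD.map_comp_assoc, natD k]
        simp }
  -- transposition maps
  let φ : ∀ {X : C} {Y : D}, (f.obj X ⟶ Y) → (X ⟶ g.obj Y) := fun {X Y} u =>
    retrC.inv.app X ≫ rC.map ((adj.homEquiv (iC.obj X) (iD.obj Y)) (sq1.hom.app X ≫ iD.map u))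
  let ψ : ∀ {X : C} {Y : D}, (X ⟶ g.obj Y) → (f.obj X ⟶ Y) := fun {X Y} v =>
    f.map v ≫ χ.app Y
  have hχ : ∀ {Y Y' : D} (k : Y ⟶ Y'), f.map (g.map k) ≫ χ.app Y' = χ.app Y ≫ k :=
    fun k => χ.naturality k
  -- `ψ` is a retraction of `φ`
  have hψφ : ∀ {X : C} {Y : D} (u : f.obj X ⟶ Y), ψ (φ u) = u := by
    intro X Y u
    show f.map (retrC.inv.app X ≫
        rC.map ((adj.homEquiv (iC.obj X) (iD.obj Y)) (sq1.hom.app X ≫ iD.map u))) ≫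
        (sq2.hom.app (g'.obj (iD.obj Y)) ≫ rD.map (adj.counit.app (iD.obj Y)) ≫
          retrD.hom.app Y) = u
    have key : f'.map ((adj.homEquiv (iC.obj X) (iD.obj Y)) (sq1.hom.app X ≫ iD.map u)) ≫
        adj.counit.app (iD.obj Y) = sq1.hom.app X ≫ iD.map u :=
      (adj.homEquiv (iC.obj X) (iD.obj Y)).symm_apply_apply (sq1.hom.app X ≫ iD.map u)
    rw [f.map_comp, Category.assoc,
      reassoc_of% (nat2 ((adj.homEquiv (iC.obj X) (iD.obj Y)) (sq1.hom.app X ≫ iD.map u))),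
      ← rD.map_comp_assoc, key,
      rD.map_comp_assoc, natD u, reassoc_of% (hcoh X), ← f.map_comp_assoc, Iso.inv_hom_id_app,
      f.map_id, Category.id_comp]
    simp
  -- naturality of `φ` in the first variable
  have hφ_left : ∀ {X' X : C} {Y : D} (a : X' ⟶ X) (u : f.obj X ⟶ Y),
      φ (f.map a ≫ u) = a ≫ φ u := by
    intro X' X Y a u
    show retrC.inv.app X' ≫
        rC.map ((adj.homEquiv (iC.obj X') (iD.obj Y)) (sq1.hom.app X' ≫ iD.map (f.map a ≫ u))) =
      a ≫ retrC.inv.app X ≫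
        rC.map ((adj.homEquiv (iC.obj X) (iD.obj Y)) (sq1.hom.app X ≫ iD.map u))
    rw [iD.map_comp, ← Category.assoc (sq1.hom.app X'), ← nat1 a, Category.assoc,
      Adjunction.homEquiv_naturality_left, rC.map_comp, ← reassoc_of% (natC a)]
  -- naturality of `φ` in the second variable
  have hφ_right : ∀ {X : C} {Y Y' : D} (u : f.obj X ⟶ Y) (k : Y ⟶ Y'),
      φ (u ≫ k) = φ u ≫ g.map k := by
    intro X Y Y' u k
    show retrC.inv.app X ≫
        rC.map ((adj.homEquiv (iC.obj X) (iD.obj Y')) (sq1.hom.app X ≫ iD.map (u ≫ k))) =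
      (retrC.inv.app X ≫
        rC.map ((adj.homEquiv (iC.obj X) (iD.obj Y)) (sq1.hom.app X ≫ iD.map u))) ≫ g.map k
    rw [iD.map_comp, ← Category.assoc (sq1.hom.app X), Adjunction.homEquiv_naturality_right,
      rC.map_comp]
    exact (Category.assoc _ _ _).symm
  -- naturality of `ψ`
  have hψ_left : ∀ {X' X : C} {Y : D} (a : X' ⟶ X) (v : X ⟶ g.obj Y),
      ψ (a ≫ v) = f.map a ≫ ψ v := by
    intro X' X Y a v
    show f.map (a ≫ v) ≫ χ.app Y = f.map a ≫ f.map v ≫ χ.app Y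
    rw [f.map_comp, Category.assoc]
  -- the idempotent on `g`
  let p : g ⟶ g :=
    { app := fun Y => φ (χ.app Y)
      naturality := fun Y Y' k => by
        show g.map k ≫ φ (χ.app Y') = φ (χ.app Y) ≫ g.map k
        rw [← hφ_left (g.map k) (χ.app Y'), hχ k, hφ_right] }
  have he : ∀ {X : C} {Y : D} (v : X ⟶ g.obj Y), φ (ψ v) = v ≫ p.app Y :=
    fun v => hφ_left v (χ.app _)
  have hp : p ≫ p = p := by
    ext Y
    show p.app Y ≫ p.app Y = p.app Y
    exact ((he (p.app Y)).symm.trans (congrArg (fun t => φ t) (hψφ (χ.app Y))))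
  -- split the idempotent in the functor category
  obtain ⟨G, s, π, hsπ, hπs⟩ := IsIdempotentComplete.idempotents_split (C := D ⥤ C) g p hp
  have hπs' : ∀ Y : D, π.app Y ≫ s.app Y = p.app Y := fun Y => congrArg (fun t => t.app Y) hπs
  have hsπ' : ∀ Y : D, s.app Y ≫ π.app Y = 𝟙 (G.obj Y) :=
    fun Y => congrArg (fun t => t.app Y) hsπ
  have hsp : ∀ Y : D, s.app Y ≫ p.app Y = s.app Y := by
    intro Y
    rw [← hπs' Y, ← Category.assoc, hsπ' Y, Category.id_comp]
  exact ⟨⟨G, ⟨Adjunction.mkOfHomEquiv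
    { homEquiv := fun X Y =>
        { toFun := fun u => φ u ≫ π.app Y
          invFun := fun v => ψ (v ≫ s.app Y)
          left_inv := fun u => by
            show ψ ((φ u ≫ π.app Y) ≫ s.app Y) = u
            rw [Category.assoc, hπs' Y, ← he, hψφ, hψφ]
          right_inv := fun v => by
            show φ (ψ (v ≫ s.app Y)) ≫ π.app Y = v
            rw [he, Category.assoc, Category.assoc, reassoc_of% (hsp Y), hsπ' Y,
              Category.comp_id] }
      homEquiv_naturality_left_symm := fun {X' X Y} a v => by
        show ψ ((a ≫ v) ≫ s.app Y) = f.map a ≫ ψ (v ≫ s.app Y)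
        rw [Category.assoc, hψ_left]
      homEquiv_naturality_right := fun {X Y Y'} u k => by
        show φ (u ≫ k) ≫ π.app Y' = (φ u ≫ π.app Y) ≫ G.map k
        rw [hφ_right]
        simp only [Category.assoc]
        rw [π.naturality k] }⟩⟩⟩
end

section
/- Retracts of horizontally right-adjointable squares are horizontally right adjointable: given two commutative squares □₀, □₁ of categories and functors, each with horizontal arrows p_i : C_i → D_i, h_i : E_i → F_i admitting right adjoints, and vertical arrows q_i, f_i, if □₀ is a retract of □₁ in the category of squares, and the Beck–Chevalley transformation q₁ p₁^R → h₁^R f₁ of □₁ is an equivalence, then the Beck–Chevalley transformation q₀ p₀^R → h₀^R f₀ of □₀ is an equivalence. -/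
/-!
Mates are compatible with pasting: a morphism of squares `□ → □'` (a commuting cube) yields a
commuting square between the mate of `□`, pushed forward along `uE`, and the mate of `□'`
restricted along `uD`, whose horizontal sides are built from the mates of the top and bottom
faces. For the composite `□₀ → □₁ → □₀` the pasted face mates are the identity up to the
isomorphisms `ρ`. So each component of the mate of `□₀` is a retract, in the arrow category, of
`rE` applied to a component of the mate of `□₁`, and retracts of isomorphisms are isomorphisms.
-/

open CategoryTheory Functor TwoSquare

section
variable {C D E F : Type*} [Category C] [Category D] [Category E] [Category F]
  {L₁ : C ⥤ D} {R₁ : D ⥤ C} {L₂ : E ⥤ F} {R₂ : F ⥤ E} (adj₁ : L₁ ⊣ R₁) (adj₂ : L₂ ⊣ R₂)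

lemma mateEquiv_whiskerTop {G G' : C ⥤ E} {H : D ⥤ F} (w : TwoSquare G' L₁ L₂ H) (γ : G ⟶ G') :
    mateEquiv adj₁ adj₂ (w.whiskerTop γ) = (mateEquiv adj₁ adj₂ w).whiskerRight γ := by
  ext X
  simp

lemma mateEquiv_whiskerBottom {G : C ⥤ E} {H H' : D ⥤ F} (w : TwoSquare G L₁ L₂ H)
    (δ : H ⟶ H') :
    mateEquiv adj₁ adj₂ (w.whiskerBottom δ) = (mateEquiv adj₁ adj₂ w).whiskerLeft δ := by
  ext X
  simp [← R₂.map_comp, -Functor.map_comp]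

end

lemma mateEquiv_hId {C D : Type*} [Category C] [Category D] {L : C ⥤ D} {R : D ⥤ C}
    (adj : L ⊣ R) : mateEquiv adj adj (𝟙ₕ L) = 𝟙ᵥ R := by
  ext X
  simp

section
variable {A B C D E F : Type*} [Category A] [Category B] [Category C] [Category D] [Category E]
  [Category F] {L₁ : A ⥤ B} {R₁ : B ⥤ A} {L₂ : C ⥤ D} {R₂ : D ⥤ C} {L₃ : E ⥤ F} {R₃ : F ⥤ E}
  (adj₁ : L₁ ⊣ R₁) (adj₂ : L₂ ⊣ R₂) (adj₃ : L₃ ⊣ R₃)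

lemma mateEquiv_vComp_eq_of_hComp_eq {G₁ : A ⥤ C} {G₂ : C ⥤ E} {H₁ : B ⥤ D} {H₂ : D ⥤ F}
    {G : A ⥤ E} {H : B ⥤ F} (u : TwoSquare G₁ L₁ L₂ H₁) (v : TwoSquare G₂ L₂ L₃ H₂)
    (x : TwoSquare G L₁ L₃ H) (γ : G₁ ⋙ G₂ ⟶ G) (δ : H ⟶ H₁ ⋙ H₂)
    (e : u ≫ₕ v = (x.whiskerTop γ).whiskerBottom δ) :
    mateEquiv adj₁ adj₂ u ≫ᵥ mateEquiv adj₂ adj₃ v =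
      ((mateEquiv adj₁ adj₃ x).whiskerRight γ).whiskerLeft δ := by
  rw [← mateEquiv_vcomp, e, mateEquiv_whiskerBottom, mateEquiv_whiskerTop]

end

section cube
variable {C D E F C' D' E' F' : Type*} [Category C] [Category D] [Category E] [Category F]
  [Category C'] [Category D'] [Category E'] [Category F']
  {p : C ⥤ D} {h : E ⥤ F} {q : C ⥤ E} {f : D ⥤ F}
  {p' : C' ⥤ D'} {h' : E' ⥤ F'} {q' : C' ⥤ E'} {f' : D' ⥤ F'}
  {pR : D ⥤ C} {hR : F ⥤ E} {pR' : D' ⥤ C'} {hR' : F' ⥤ E'}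
  (adjp : p ⊣ pR) (adjh : h ⊣ hR) (adjp' : p' ⊣ pR') (adjh' : h' ⊣ hR')
  {uC : C ⥤ C'} {uD : D ⥤ D'} {uE : E ⥤ E'} {uF : F ⥤ F'}

lemma mateEquiv_app_comm_of_cube (w : TwoSquare q p h f) (w' : TwoSquare q' p' h' f')
    (uP : uC ⋙ p' ≅ p ⋙ uD) (uH : TwoSquare uE h h' uF) (uQ : uC ⋙ q' ≅ q ⋙ uE)
    (uΦ : f ⋙ uF ⟶ uD ⋙ f')
    (cube : ∀ X : C, w'.app (uC.obj X) =
      h'.map (uQ.hom.app X) ≫ uH.app (q.obj X) ≫ uF.map (w.app X) ≫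
        uΦ.app (p.obj X) ≫ f'.map (uP.inv.app X)) (X : D) :
    (uQ.inv.app (pR.obj X) ≫ q'.map ((mateEquiv adjp adjp' uP.hom).app X)) ≫
        (mateEquiv adjp' adjh' w').app (uD.obj X) =
      uE.map ((mateEquiv adjp adjh w).app X) ≫
        (mateEquiv adjh adjh' uH).app (f.obj X) ≫ hR'.map (uΦ.app X) := by
  have hmates := mateEquiv_vComp_eq_of_hComp_eq adjp adjp' adjh' (.mk _ _ _ _ uP.hom) w'
    (w ≫ₕ uH) uQ.hom uΦ (by ext Y; simp [cube])
  rw [mateEquiv_vcomp adjp adjh adjh'] at hmates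
  have hX := congr_arg (fun τ ↦ τ.app X) hmates
  simp only [TwoSquare.vComp_app, TwoSquare.whiskerRight_app, TwoSquare.whiskerLeft_app] at hX
  rw [Category.assoc, hX]
  simp

end cube

section retract
variable {A B C A₁ B₁ C₁ : Type*} [Category A] [Category B] [Category C]
  [Category A₁] [Category B₁] [Category C₁]
  {uA : A ⥤ A₁} {rA : A₁ ⥤ A} {uB : B ⥤ B₁} {rB : B₁ ⥤ B} {uC : C ⥤ C₁} {rC : C₁ ⥤ C}
  (ρA : uA ⋙ rA ≅ 𝟭 A) (ρB : uB ⋙ rB ≅ 𝟭 B) (ρC : uC ⋙ rC ≅ 𝟭 C)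

/-- `σ` and `σ'` exhibit `G` as a retract of `G'`: pasted together they give the identity of `G`
up to `ρA` and `ρB`. -/
def CompatibleWithRetractions {G : A ⥤ B} {G' : A₁ ⥤ B₁}
    (σ : G ⋙ uB ⟶ uA ⋙ G') (σ' : G' ⋙ rB ⟶ rA ⋙ G) : Prop :=
  ∀ X, rB.map (σ.app X) ≫ σ'.app (uA.obj X) = ρB.hom.app (G.obj X) ≫ G.map (ρA.inv.app X)

namespace CompatibleWithRetractions

lemma of_iso {G : A ⥤ B} {G' : A₁ ⥤ B₁} (e : uA ⋙ G' ≅ G ⋙ uB) (e' : rA ⋙ G ≅ G' ⋙ rB)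
    (h : ∀ X, e'.hom.app (uA.obj X) ≫ rB.map (e.hom.app X) ≫ ρB.hom.app (G.obj X) =
      G.map (ρA.hom.app X)) :
    CompatibleWithRetractions ρA ρB e.inv e'.inv := by
  intro X
  rw [← cancel_mono (G.map (ρA.hom.app X)), Category.assoc, Category.assoc, ← G.map_comp,
    Iso.inv_hom_id_app, ← h, Iso.inv_hom_id_app_assoc, ← rB.map_comp_assoc, Iso.inv_hom_id_app]
  simp

lemma of_mateEquiv {p : B ⥤ A} {pR : A ⥤ B} {p' : B₁ ⥤ A₁} {pR' : A₁ ⥤ B₁}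
    (adj : p ⊣ pR) (adj' : p' ⊣ pR') (P : TwoSquare uB p p' uA) (P' : TwoSquare rB p' p rA)
    (h : ∀ X, P'.app (uB.obj X) ≫ rA.map (P.app X) ≫ ρA.hom.app (p.obj X) =
      p.map (ρB.hom.app X)) :
    CompatibleWithRetractions ρA ρB (mateEquiv adj adj' P) (mateEquiv adj' adj P') := by
  have hmates := mateEquiv_vComp_eq_of_hComp_eq adj adj' adj P P' (𝟙ₕ p) ρB.hom ρA.inv
    (by ext X; simp [← reassoc_of% (h X)])
  rw [mateEquiv_hId] at hmates
  intro X
  simpa using congr_arg (fun τ ↦ τ.app X) hmates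

variable {ρA ρB ρC} in
lemma comp {G₁ : A ⥤ B} {G₁' : A₁ ⥤ B₁} {G₂ : B ⥤ C} {G₂' : B₁ ⥤ C₁}
    {σ₁ : G₁ ⋙ uB ⟶ uA ⋙ G₁'} {σ₁' : G₁' ⋙ rB ⟶ rA ⋙ G₁}
    {σ₂ : G₂ ⋙ uC ⟶ uB ⋙ G₂'} {σ₂' : G₂' ⋙ rC ⟶ rB ⋙ G₂}
    (h₁ : CompatibleWithRetractions ρA ρB σ₁ σ₁') (h₂ : CompatibleWithRetractions ρB ρC σ₂ σ₂') :
    CompatibleWithRetractions ρA ρC (G := G₁ ⋙ G₂) (G' := G₁' ⋙ G₂')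
      (whiskerLeft G₁ σ₂ ≫ whiskerRight σ₁ G₂') (whiskerLeft G₁' σ₂' ≫ whiskerRight σ₁' G₂) := by
  intro X
  have hn := σ₂'.naturality (σ₁.app X)
  dsimp at hn ⊢
  rw [Functor.map_comp, Category.assoc, reassoc_of% hn, ← G₂.map_comp, h₁ X, reassoc_of% (h₂ _)]
  simp

variable {ρA ρB} in
def retract {G : A ⥤ B} {G' : A₁ ⥤ B₁} {σ : G ⋙ uB ⟶ uA ⋙ G'} {σ' : G' ⋙ rB ⟶ rA ⋙ G}
    (h : CompatibleWithRetractions ρA ρB σ σ') (X : A) :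
    Retract (G.obj X) (rB.obj (G'.obj (uA.obj X))) where
  i := ρB.inv.app _ ≫ rB.map (σ.app X)
  r := σ'.app (uA.obj X) ≫ G.map (ρA.hom.app X)
  retract := by rw [Category.assoc, reassoc_of% (h X)]; simp

variable {ρA ρB} in
lemma isIso_of_isIso {G K : A ⥤ B} {G' K' : A₁ ⥤ B₁}
    {σ : G ⋙ uB ⟶ uA ⋙ G'} {σ' : G' ⋙ rB ⟶ rA ⋙ G}
    {τ : K ⋙ uB ⟶ uA ⋙ K'} {τ' : K' ⋙ rB ⟶ rA ⋙ K}
    (hG : CompatibleWithRetractions ρA ρB σ σ') (hK : CompatibleWithRetractions ρA ρB τ τ')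
    (β : G ⟶ K) (β' : G' ⟶ K') [IsIso β']
    (hi : ∀ X, σ.app X ≫ β'.app (uA.obj X) = uB.map (β.app X) ≫ τ.app X)
    (hr : ∀ Y, σ'.app Y ≫ β.app (rA.obj Y) = rB.map (β'.app Y) ≫ τ'.app Y) :
    IsIso β := by
  have (X : A) : IsIso (β.app X) :=
    MorphismProperty.of_retract (P := .isomorphisms B) (g := rB.map (β'.app (uA.obj X)))
      { i := Arrow.homMk (hG.retract X).i (hK.retract X).i (by
          dsimp [retract]
          rw [Category.assoc, ← rB.map_comp, hi, rB.map_comp]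
          exact (ρB.inv.naturality_assoc _ _).symm)
        r := Arrow.homMk (hG.retract X).r (hK.retract X).r (by
          dsimp [retract]
          rw [Category.assoc, β.naturality, reassoc_of% (hr _)])
        retract := by ext; exacts [(hG.retract X).retract, (hK.retract X).retract] }
      (show IsIso _ from inferInstance)
  exact NatIso.isIso_of_isIso_app β

end CompatibleWithRetractions

end retract

theorem stmt_16_general
    {C₀ D₀ E₀ F₀ : Type*} [Category C₀] [Category D₀] [Category E₀] [Category F₀]
    {C₁ D₁ E₁ F₁ : Type*} [Category C₁] [Category D₁] [Category E₁] [Category F₁]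
    (p₀ : C₀ ⥤ D₀) (h₀ : E₀ ⥤ F₀) (q₀ : C₀ ⥤ E₀) (f₀ : D₀ ⥤ F₀)
    (p₁ : C₁ ⥤ D₁) (h₁ : E₁ ⥤ F₁) (q₁ : C₁ ⥤ E₁) (f₁ : D₁ ⥤ F₁)
    (pR₀ : D₀ ⥤ C₀) (hR₀ : F₀ ⥤ E₀) (pR₁ : D₁ ⥤ C₁) (hR₁ : F₁ ⥤ E₁)
    (adjp₀ : p₀ ⊣ pR₀) (adjh₀ : h₀ ⊣ hR₀) (adjp₁ : p₁ ⊣ pR₁) (adjh₁ : h₁ ⊣ hR₁)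
    (α₀ : q₀ ⋙ h₀ ⟶ p₀ ⋙ f₀) (α₁ : q₁ ⋙ h₁ ⟶ p₁ ⋙ f₁)
    (uC : C₀ ⥤ C₁) (uD : D₀ ⥤ D₁) (uE : E₀ ⥤ E₁) (uF : F₀ ⥤ F₁)
    (rC : C₁ ⥤ C₀) (rD : D₁ ⥤ D₀) (rE : E₁ ⥤ E₀) (rF : F₁ ⥤ F₀)
    (ρC : uC ⋙ rC ≅ 𝟭 C₀) (ρD : uD ⋙ rD ≅ 𝟭 D₀)
    (ρE : uE ⋙ rE ≅ 𝟭 E₀) (ρF : uF ⋙ rF ≅ 𝟭 F₀)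
    (uP : uC ⋙ p₁ ≅ p₀ ⋙ uD) (uH : uE ⋙ h₁ ≅ h₀ ⋙ uF)
    (uQ : uC ⋙ q₁ ≅ q₀ ⋙ uE) (uΦ : uD ⋙ f₁ ≅ f₀ ⋙ uF)
    (rP : rC ⋙ p₀ ≅ p₁ ⋙ rD) (rH : rE ⋙ h₀ ≅ h₁ ⋙ rF)
    (rQ : rC ⋙ q₀ ≅ q₁ ⋙ rE) (rΦ : rD ⋙ f₀ ≅ f₁ ⋙ rF)
    (cubeU : ∀ X : C₀, α₁.app (uC.obj X) =
      h₁.map (uQ.hom.app X) ≫ uH.hom.app (q₀.obj X) ≫ uF.map (α₀.app X) ≫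
        uΦ.inv.app (p₀.obj X) ≫ f₁.map (uP.inv.app X))
    (cubeR : ∀ X : C₁, α₀.app (rC.obj X) =
      h₀.map (rQ.hom.app X) ≫ rH.hom.app (q₁.obj X) ≫ rF.map (α₁.app X) ≫
        rΦ.inv.app (p₁.obj X) ≫ f₀.map (rP.inv.app X))
    (compP : ∀ X : C₀, rP.hom.app (uC.obj X) ≫ rD.map (uP.hom.app X) ≫
        ρD.hom.app (p₀.obj X) = p₀.map (ρC.hom.app X))
    (compQ : ∀ X : C₀, rQ.hom.app (uC.obj X) ≫ rE.map (uQ.hom.app X) ≫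
        ρE.hom.app (q₀.obj X) = q₀.map (ρC.hom.app X))
    (compH : ∀ X : E₀, rH.hom.app (uE.obj X) ≫ rF.map (uH.hom.app X) ≫
        ρF.hom.app (h₀.obj X) = h₀.map (ρE.hom.app X))
    (compΦ : ∀ X : D₀, rΦ.hom.app (uD.obj X) ≫ rF.map (uΦ.hom.app X) ≫
        ρF.hom.app (f₀.obj X) = f₀.map (ρD.hom.app X))
    (hmate₁ : IsIso (mateEquiv adjp₁ adjh₁ α₁)) :
    IsIso (mateEquiv adjp₀ adjh₀ α₀) := by
  have hsource := (CompatibleWithRetractions.of_mateEquiv ρD ρC adjp₀ adjp₁ uP.hom rP.hom compP).comp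
    (.of_iso ρC ρE uQ rQ compQ)
  have htarget := (CompatibleWithRetractions.of_iso ρD ρF uΦ rΦ compΦ).comp
    (.of_mateEquiv ρF ρE adjh₀ adjh₁ uH.hom rH.hom compH)
  exact hsource.isIso_of_isIso htarget _ (mateEquiv adjp₁ adjh₁ α₁)
    (mateEquiv_app_comm_of_cube adjp₀ adjh₀ adjp₁ adjh₁ α₀ α₁ uP uH.hom uQ uΦ.inv cubeU)
    (mateEquiv_app_comm_of_cube adjp₁ adjh₁ adjp₀ adjh₀ α₁ α₀ rP rH.hom rQ rΦ.inv cubeR)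

/-- Retracts of horizontally right-adjointable squares are horizontally right adjointable:
given squares `□₀`, `□₁` of categories with horizontal left adjoints `p_i` (top) and `h_i`
(bottom), vertical functors `q_i`, `f_i`, commuting isomorphisms `α_i : q_i ⋙ h_i ≅ p_i ⋙ f_i`,
and a retraction of `□₀` onto a retract of `□₁` (inclusion functors `u`, retraction functors `r`
at each corner, commuting with all the data, with `r ∘ u ≅ id`), if the Beck–Chevalley (mate)
transformation of `□₁` is an isomorphism, then so is that of `□₀`. -/
theorem stmt_16
    {C₀ D₀ E₀ F₀ : Type*} [Category C₀] [Category D₀] [Category E₀] [Category F₀]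
    {C₁ D₁ E₁ F₁ : Type*} [Category C₁] [Category D₁] [Category E₁] [Category F₁]
    (p₀ : C₀ ⥤ D₀) (h₀ : E₀ ⥤ F₀) (q₀ : C₀ ⥤ E₀) (f₀ : D₀ ⥤ F₀)
    (p₁ : C₁ ⥤ D₁) (h₁ : E₁ ⥤ F₁) (q₁ : C₁ ⥤ E₁) (f₁ : D₁ ⥤ F₁)
    (pR₀ : D₀ ⥤ C₀) (hR₀ : F₀ ⥤ E₀) (pR₁ : D₁ ⥤ C₁) (hR₁ : F₁ ⥤ E₁)
    (adjp₀ : p₀ ⊣ pR₀) (adjh₀ : h₀ ⊣ hR₀) (adjp₁ : p₁ ⊣ pR₁) (adjh₁ : h₁ ⊣ hR₁)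
    (α₀ : q₀ ⋙ h₀ ⟶ p₀ ⋙ f₀) (α₁ : q₁ ⋙ h₁ ⟶ p₁ ⋙ f₁) [IsIso α₀] [IsIso α₁]
    (uC : C₀ ⥤ C₁) (uD : D₀ ⥤ D₁) (uE : E₀ ⥤ E₁) (uF : F₀ ⥤ F₁)
    (rC : C₁ ⥤ C₀) (rD : D₁ ⥤ D₀) (rE : E₁ ⥤ E₀) (rF : F₁ ⥤ F₀)
    (ρC : uC ⋙ rC ≅ 𝟭 C₀) (ρD : uD ⋙ rD ≅ 𝟭 D₀)
    (ρE : uE ⋙ rE ≅ 𝟭 E₀) (ρF : uF ⋙ rF ≅ 𝟭 F₀)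
    (uP : uC ⋙ p₁ ≅ p₀ ⋙ uD) (uH : uE ⋙ h₁ ≅ h₀ ⋙ uF)
    (uQ : uC ⋙ q₁ ≅ q₀ ⋙ uE) (uΦ : uD ⋙ f₁ ≅ f₀ ⋙ uF)
    (rP : rC ⋙ p₀ ≅ p₁ ⋙ rD) (rH : rE ⋙ h₀ ≅ h₁ ⋙ rF)
    (rQ : rC ⋙ q₀ ≅ q₁ ⋙ rE) (rΦ : rD ⋙ f₀ ≅ f₁ ⋙ rF)
    (cubeU : ∀ X : C₀, α₁.app (uC.obj X) =
      h₁.map (uQ.hom.app X) ≫ uH.hom.app (q₀.obj X) ≫ uF.map (α₀.app X) ≫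
        uΦ.inv.app (p₀.obj X) ≫ f₁.map (uP.inv.app X))
    (cubeR : ∀ X : C₁, α₀.app (rC.obj X) =
      h₀.map (rQ.hom.app X) ≫ rH.hom.app (q₁.obj X) ≫ rF.map (α₁.app X) ≫
        rΦ.inv.app (p₁.obj X) ≫ f₀.map (rP.inv.app X))
    (compP : ∀ X : C₀, rP.hom.app (uC.obj X) ≫ rD.map (uP.hom.app X) ≫
        ρD.hom.app (p₀.obj X) = p₀.map (ρC.hom.app X))
    (compQ : ∀ X : C₀, rQ.hom.app (uC.obj X) ≫ rE.map (uQ.hom.app X) ≫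
        ρE.hom.app (q₀.obj X) = q₀.map (ρC.hom.app X))
    (compH : ∀ X : E₀, rH.hom.app (uE.obj X) ≫ rF.map (uH.hom.app X) ≫
        ρF.hom.app (h₀.obj X) = h₀.map (ρE.hom.app X))
    (compΦ : ∀ X : D₀, rΦ.hom.app (uD.obj X) ≫ rF.map (uΦ.hom.app X) ≫
        ρF.hom.app (f₀.obj X) = f₀.map (ρD.hom.app X))
    (hmate₁ : IsIso (mateEquiv adjp₁ adjh₁ α₁)) :
    IsIso (mateEquiv adjp₀ adjh₀ α₀) :=
  stmt_16_general p₀ h₀ q₀ f₀ p₁ h₁ q₁ f₁ pR₀ hR₀ pR₁ hR₁ adjp₀ adjh₀ adjp₁ adjh₁ α₀ α₁ uC uD uE uF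
    rC rD rE rF ρC ρD ρE ρF uP uH uQ uΦ rP rH rQ rΦ cubeU cubeR compP compQ compH compΦ hmate₁
end
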